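/- arXiv:2306.16035 — 4 statements merged into one kernel-verified Lean document; each statement's English description precedes it below -/
import Mathlib

section
/- Suppose Φ : [0,1] → ℝ is a function such that for every λ ∈ [0,1], (1/x)·#{positive integers k ≤ x : φ(k)/k ≤ λ} tends to Φ(λ) as x → ∞, and suppose Φ is monotone increasing. Then limsup_{x → ∞} N⁺_φ(x)/x ≤ 1/2 + ∫₀¹ Φ(t)/(1+t)² dt, where N⁺_φ(x) is the number of positive integers n ≤ x expressible as n = k + φ(k) for some positive integer k. -/
open Filter

open scoped Classical in
/-- Number of positive integers `n ≤ x` representable as `n = k + f k` for some `k ≥ 1`. -/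
noncomputable def Nplus (f : ℕ → ℕ) (x : ℝ) : ℕ :=
  ((Finset.Icc 1 ⌊x⌋₊).filter (fun n => ∃ k : ℕ, 0 < k ∧ n = k + f k)).card



noncomputable def cnt (l y : ℝ) : ℕ :=
  ((Finset.Icc 1 ⌊y⌋₊).filter (fun k => (Nat.totient k : ℝ) / k ≤ l)).card

noncomputable def tt (m j : ℕ) : ℝ := (j : ℝ) / (m : ℝ)

lemma tendsto_cnt_div {Φ : ℝ → ℝ} {l : ℝ}
    (h : Tendsto (fun x : ℝ => (cnt l x : ℝ) / x) atTop (nhds (Φ l)))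
    {c : ℝ} (hc : 1 ≤ c) :
    Tendsto (fun x : ℝ => (cnt l (x / c) : ℝ) / x) atTop (nhds (Φ l / c)) := by
  have hc0 : (0:ℝ) < c := lt_of_lt_of_le one_pos hc
  have h1 : Tendsto (fun x : ℝ => x / c) atTop atTop := tendsto_id.atTop_div_const hc0
  have h2 := (h.comp h1).div_const c
  apply h2.congr'
  filter_upwards [eventually_gt_atTop (0:ℝ)] with x hx
  simp only [Function.comp]
  field_simp

lemma tendsto_floor_half :
    Tendsto (fun x : ℝ => (⌊x / 2⌋₊ : ℝ) / x) atTop (nhds (1/2)) := by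
  have h1 : Tendsto (fun x : ℝ => x / 2) atTop atTop := tendsto_id.atTop_div_const two_pos
  have h2 := (tendsto_nat_floor_div_atTop.comp h1).div_const 2
  rw [show (1:ℝ)/2 = 1/2 from rfl] at h2
  apply h2.congr'
  filter_upwards [eventually_gt_atTop (0:ℝ)] with x hx
  simp only [Function.comp]
  field_simp



lemma tt_nonneg (m j : ℕ) : 0 ≤ tt m j := by rw [tt]; positivity

lemma tt_step (m j : ℕ) : tt m (j+1) = tt m j + 1/m := by
  rw [tt, tt]; push_cast; ring

lemma tt_mono (m j : ℕ) : tt m j ≤ tt m (j+1) := by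
  rw [tt_step]
  have : (0:ℝ) ≤ 1/m := by positivity
  linarith

lemma integral_inv_sq (a b : ℝ) (ha : 0 ≤ a) (hab : a ≤ b) :
    ∫ t in a..b, ((1+t)^2)⁻¹ = (1+a)⁻¹ - (1+b)⁻¹ := by
  have hicc : Set.uIcc a b = Set.Icc a b := Set.uIcc_of_le hab
  have hpos : ∀ t ∈ Set.uIcc a b, (0:ℝ) < 1 + t := by
    intro t ht
    rw [hicc] at ht
    have := ht.1; linarith
  have hderiv : ∀ t ∈ Set.uIcc a b, HasDerivAt (fun u : ℝ => -(1+u)⁻¹) ((1+t)^2)⁻¹ t := by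
    intro t ht
    have h1 : HasDerivAt (fun u : ℝ => 1 + u) 1 t := (hasDerivAt_id t).const_add 1
    have h2 : HasDerivAt (fun u : ℝ => -(1+u)⁻¹) (-(-1 / (1+t)^2)) t :=
      (h1.inv (ne_of_gt (hpos t ht))).neg
    convert h2 using 1
    ring
  have hcont : ContinuousOn (fun t : ℝ => ((1+t)^2)⁻¹) (Set.uIcc a b) := by
    apply ContinuousOn.inv₀
    · fun_prop
    · intro t ht
      have := hpos t ht
      positivity
  rw [intervalIntegral.integral_eq_sub_of_hasDerivAt hderiv hcont.intervalIntegrable]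
  ring

lemma invsq_contOn {s : Set ℝ} (hs : ∀ t ∈ s, (0:ℝ) ≤ t) :
    ContinuousOn (fun t : ℝ => ((1+t)^2)⁻¹) s := by
  apply ContinuousOn.inv₀
  · fun_prop
  · intro t ht
    have := hs t ht
    positivity

lemma riemann_bound (Φ : ℝ → ℝ) (hΦmono : MonotoneOn Φ (Set.Icc (0:ℝ) 1))
    (hΦ0 : 0 ≤ Φ 0) (hΦ1 : Φ 1 ≤ 1) (m : ℕ) (hm : 0 < m) :
    ∑ j ∈ Finset.range m,
      (Φ (tt m (j+1)) / (1 + tt m j) - Φ (tt m (j+1)) / (1 + tt m (j+1)))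
      ≤ (∫ t in (0:ℝ)..1, Φ t * ((1+t)^2)⁻¹) + 1/m := by
  have hmR : (0:ℝ) < m := by exact_mod_cast hm
  have htmem : ∀ j : ℕ, j ≤ m → tt m j ∈ Set.Icc (0:ℝ) 1 := by
    intro j hj
    refine ⟨tt_nonneg m j, ?_⟩
    rw [tt, div_le_one hmR]
    exact_mod_cast hj
  have hsub : ∀ j : ℕ, j < m → Set.uIcc (tt m j) (tt m (j+1)) ⊆ Set.Icc (0:ℝ) 1 := by
    intro j hj
    rw [Set.uIcc_of_le (tt_mono m j)]
    exact Set.Icc_subset_Icc (htmem j hj.le).1 (htmem (j+1) hj).2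
  have hinteg : ∀ j < m, IntervalIntegrable (fun t => Φ t * ((1+t)^2)⁻¹)
      MeasureTheory.volume (tt m j) (tt m (j+1)) := by
    intro j hj
    have h1 : IntervalIntegrable Φ MeasureTheory.volume (tt m j) (tt m (j+1)) :=
      (hΦmono.mono (hsub j hj)).intervalIntegrable
    exact h1.mul_continuousOn (invsq_contOn (fun t ht => ((hsub j hj) ht).1))
  have hpiece : ∀ j < m,
      Φ (tt m (j+1)) / (1 + tt m j) - Φ (tt m (j+1)) / (1 + tt m (j+1)) ≤
      (∫ t in (tt m j)..(tt m (j+1)), Φ t * ((1+t)^2)⁻¹) +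
        (Φ (tt m (j+1)) - Φ (tt m j)) * (1/m) := by
    intro j hj
    have ha := htmem j hj.le
    have hb := htmem (j+1) hj
    have h1tj : (0:ℝ) < 1 + tt m j := by have := ha.1; linarith
    have h1tj1 : (0:ℝ) < 1 + tt m (j+1) := by have := hb.1; linarith
    have hw : ∫ t in (tt m j)..(tt m (j+1)), ((1+t)^2)⁻¹
        = (1 + tt m j)⁻¹ - (1 + tt m (j+1))⁻¹ :=
      integral_inv_sq _ _ ha.1 (tt_mono m j)
    have hlow : Φ (tt m j) * ((1 + tt m j)⁻¹ - (1 + tt m (j+1))⁻¹) ≤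
        ∫ t in (tt m j)..(tt m (j+1)), Φ t * ((1+t)^2)⁻¹ := by
      rw [← hw, ← intervalIntegral.integral_const_mul]
      apply intervalIntegral.integral_mono_on (tt_mono m j) ?_ (hinteg j hj)
      · intro t ht
        have htI : t ∈ Set.Icc (0:ℝ) 1 := ⟨le_trans ha.1 ht.1, le_trans ht.2 hb.2⟩
        have hmo : Φ (tt m j) ≤ Φ t := hΦmono ha htI ht.1
        have hps : (0:ℝ) ≤ ((1+t)^2)⁻¹ := by
          have := htI.1; positivity
        exact mul_le_mul_of_nonneg_right hmo hps
      · exact ((invsq_contOn (fun t ht => ((hsub j hj) ht).1)).intervalIntegrable).const_mul _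
    have hwle : (1 + tt m j)⁻¹ - (1 + tt m (j+1))⁻¹ ≤ 1/m := by
      have heq : (1 + tt m j)⁻¹ - (1 + tt m (j+1))⁻¹
          = (tt m (j+1) - tt m j)/((1 + tt m j)*(1 + tt m (j+1))) := by
        field_simp
        ring
      rw [heq, show tt m (j+1) - tt m j = 1/m by rw [tt_step]; ring]
      apply div_le_self (by positivity)
      nlinarith [ha.1, hb.1]
    have hwpos : 0 ≤ (1 + tt m j)⁻¹ - (1 + tt m (j+1))⁻¹ := by
      have h' : (1 + tt m j) ≤ (1 + tt m (j+1)) := by linarith [tt_mono m j]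
      have := one_div_le_one_div_of_le h1tj h'
      rw [one_div, one_div] at this
      linarith
    have hmonodiff : 0 ≤ Φ (tt m (j+1)) - Φ (tt m j) :=
      sub_nonneg.mpr (hΦmono ha hb (tt_mono m j))
    have heq2 : Φ (tt m (j+1)) / (1 + tt m j) - Φ (tt m (j+1)) / (1 + tt m (j+1))
        = Φ (tt m j) * ((1 + tt m j)⁻¹ - (1 + tt m (j+1))⁻¹)
          + (Φ (tt m (j+1)) - Φ (tt m j)) * ((1 + tt m j)⁻¹ - (1 + tt m (j+1))⁻¹) := by
      rw [div_eq_mul_inv, div_eq_mul_inv]; ring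
    rw [heq2]
    have h2 : (Φ (tt m (j+1)) - Φ (tt m j)) * ((1 + tt m j)⁻¹ - (1 + tt m (j+1))⁻¹)
        ≤ (Φ (tt m (j+1)) - Φ (tt m j)) * (1/m) :=
      mul_le_mul_of_nonneg_left hwle hmonodiff
    linarith [hlow]
  have htt0 : tt m 0 = 0 := by simp [tt]
  have httm : tt m m = 1 := by rw [tt]; field_simp
  calc ∑ j ∈ Finset.range m,
        (Φ (tt m (j+1)) / (1 + tt m j) - Φ (tt m (j+1)) / (1 + tt m (j+1)))
      ≤ ∑ j ∈ Finset.range m,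
        ((∫ t in (tt m j)..(tt m (j+1)), Φ t * ((1+t)^2)⁻¹)
          + (Φ (tt m (j+1)) - Φ (tt m j)) * (1/m)) :=
        Finset.sum_le_sum (fun j hj => hpiece j (Finset.mem_range.mp hj))
    _ = (∑ j ∈ Finset.range m, ∫ t in (tt m j)..(tt m (j+1)), Φ t * ((1+t)^2)⁻¹)
          + (∑ j ∈ Finset.range m, (Φ (tt m (j+1)) - Φ (tt m j))) * (1/m) := by
        rw [Finset.sum_add_distrib, Finset.sum_mul]
    _ = (∫ t in (tt m 0)..(tt m m), Φ t * ((1+t)^2)⁻¹)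
          + (Φ (tt m m) - Φ (tt m 0)) * (1/m) := by
        rw [intervalIntegral.sum_integral_adjacent_intervals hinteg,
          Finset.sum_range_sub (fun j => Φ (tt m j))]
    _ ≤ (∫ t in (0:ℝ)..1, Φ t * ((1+t)^2)⁻¹) + 1/m := by
        rw [htt0, httm]
        have h1m : (0:ℝ) ≤ 1/m := by positivity
        nlinarith [hΦ0, hΦ1]



lemma nplus_le (m : ℕ) (hm : 0 < m) (x : ℝ) (hx : 1 ≤ x) :
    (Nplus Nat.totient x : ℝ) ≤ (⌊x/2⌋₊ : ℝ) +
      ∑ j ∈ Finset.range m,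
        ((cnt (tt m (j+1)) (x / (1 + tt m j)) : ℝ) -
          (cnt (tt m (j+1)) (x / (1 + tt m (j+1))) : ℝ)) := by
  classical
  have hx0 : (0:ℝ) < x := lt_of_lt_of_le one_pos hx
  set X := ⌊x⌋₊ with hX
  have hXx : (X : ℝ) ≤ x := Nat.floor_le hx0.le
  set A : ℕ → Finset ℕ := fun j =>
    (Finset.Icc 1 ⌊x/(1+tt m j)⌋₊).filter
      (fun k => (Nat.totient k : ℝ)/k ≤ tt m (j+1)) with hA
  set A' : ℕ → Finset ℕ := fun j =>
    (Finset.Icc 1 ⌊x/(1+tt m (j+1))⌋₊).filter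
      (fun k => (Nat.totient k : ℝ)/k ≤ tt m (j+1)) with hA'
  have h1t : ∀ j : ℕ, (0:ℝ) < 1 + tt m j := fun j => by
    have := tt_nonneg m j; linarith
  have hmR0 : (0:ℝ) ≤ (m:ℝ) := by positivity
  have httj : ∀ j : ℕ, tt m j ≤ tt m (j+1) := by
    intro j
    rw [tt, tt]
    push_cast
    have h : ((j:ℝ)+1)/m = (j:ℝ)/m + 1/m := by ring
    have h2 : (0:ℝ) ≤ 1/m := by positivity
    rw [h]
    linarith
  have hA'sub : ∀ j, A' j ⊆ A j := by
    intro j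
    apply Finset.filter_subset_filter
    apply Finset.Icc_subset_Icc le_rfl
    apply Nat.floor_mono
    gcongr
    · exact h1t j
    · exact httj j
  -- Step 1 : Nplus ≤ card of witnesses
  set S : Finset ℕ := (Finset.Icc 1 X).filter (fun k => k + Nat.totient k ≤ X) with hS
  have h1 : Nplus Nat.totient x ≤ S.card := by
    rw [Nplus]
    have hsub : (Finset.Icc 1 X).filter (fun n => ∃ k : ℕ, 0 < k ∧ n = k + Nat.totient k)
        ⊆ S.image (fun k => k + Nat.totient k) := by
      intro n hn
      simp only [Finset.mem_filter, Finset.mem_Icc] at hn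
      obtain ⟨⟨hn1, hn2⟩, k, hk0, hkn⟩ := hn
      refine Finset.mem_image.mpr ⟨k, ?_, hkn.symm⟩
      simp only [hS, Finset.mem_filter, Finset.mem_Icc]
      refine ⟨⟨hk0, ?_⟩, ?_⟩ <;> omega
    exact le_trans (Finset.card_le_card hsub) Finset.card_image_le
  -- Step 2 : covering
  have h2 : S ⊆ Finset.Icc 1 ⌊x/2⌋₊ ∪ (Finset.range m).biUnion (fun j => A j \ A' j) := by
    intro k hk
    simp only [hS, Finset.mem_filter, Finset.mem_Icc] at hk
    obtain ⟨⟨hk1, hkX⟩, hkphi⟩ := hk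
    have hk0 : (0:ℝ) < k := by exact_mod_cast hk1
    have hkx : (k:ℝ) ≤ x := le_trans (by exact_mod_cast hkX) hXx
    rw [Finset.mem_union]
    by_cases hhalf : (k:ℝ) ≤ x/2
    · exact Or.inl (Finset.mem_Icc.mpr ⟨hk1, Nat.le_floor hhalf⟩)
    · right
      push_neg at hhalf
      have hmR : (0:ℝ) < m := by exact_mod_cast hm
      set s : ℝ := x / k - 1 with hs
      clear_value s
      have hs0 : 0 ≤ s := by
        have : 1 ≤ x/k := (one_le_div hk0).mpr hkx
        simp only [hs]; linarith
      have hs1 : s < 1 := by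
        have : x/k < 2 := (div_lt_iff₀ hk0).mpr (by linarith)
        simp only [hs]; linarith
      set j := ⌊(m:ℝ) * s⌋₊ with hj
      clear_value j
      have hjm : j < m := by
        have h' : (m:ℝ) * s < m := by nlinarith
        rw [hj]
        exact_mod_cast (Nat.floor_lt (mul_nonneg hmR.le hs0)).mpr h'
      refine Finset.mem_biUnion.mpr ⟨j, Finset.mem_range.mpr hjm, ?_⟩
      have htj : tt m j ≤ s := by
        rw [tt, div_le_iff₀ hmR]
        have := Nat.floor_le (mul_nonneg hmR.le hs0)
        rw [← hj] at this; linarith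
      have htj1 : s < tt m (j+1) := by
        rw [tt, lt_div_iff₀ hmR]
        have := Nat.lt_floor_add_one ((m:ℝ)*s)
        rw [← hj] at this; push_cast; linarith
      have hphis : (Nat.totient k : ℝ)/k ≤ s := by
        have hsum : (k:ℝ) + Nat.totient k ≤ x := by
          have : ((k + Nat.totient k : ℕ):ℝ) ≤ (X:ℝ) := by exact_mod_cast hkphi
          push_cast at this; linarith
        rw [div_le_iff₀ hk0, hs]
        have hxk : (x/k) * k = x := div_mul_cancel₀ x hk0.ne'
        nlinarith
      rw [Finset.mem_sdiff]
      constructor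
      · simp only [hA, Finset.mem_filter, Finset.mem_Icc]
        refine ⟨⟨hk1, Nat.le_floor ?_⟩, le_trans hphis htj1.le⟩
        rw [le_div_iff₀ (h1t j)]
        have h2' : 1 + tt m j ≤ x/k := by linarith
        calc (k:ℝ) * (1 + tt m j) ≤ k * (x/k) := mul_le_mul_of_nonneg_left h2' hk0.le
          _ = x := mul_div_cancel₀ x hk0.ne'
      · simp only [hA', Finset.mem_filter, Finset.mem_Icc]
        intro hmem
        have hle : k ≤ ⌊x/(1+tt m (j+1))⌋₊ := hmem.1.2
        have hfl : (⌊x/(1+tt m (j+1))⌋₊:ℝ) < k := by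
          refine lt_of_le_of_lt (Nat.floor_le (div_nonneg hx0.le (h1t (j+1)).le)) ?_
          rw [div_lt_iff₀ (h1t (j+1))]
          have hlt : x/k < 1 + tt m (j+1) := by linarith
          have := (div_lt_iff₀ hk0).mp hlt
          nlinarith
        have : (k:ℝ) ≤ ⌊x/(1+tt m (j+1))⌋₊ := by exact_mod_cast hle
        linarith
  -- Step 3 : cards
  have h3 : (S.card : ℝ) ≤ (⌊x/2⌋₊:ℝ) + ∑ j ∈ Finset.range m,
      ((A j).card - ((A' j).card : ℝ)) := by
    have hc1 : S.card ≤ ⌊x/2⌋₊ + ∑ j ∈ Finset.range m, (A j \ A' j).card := by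
      refine le_trans (Finset.card_le_card h2) (le_trans (Finset.card_union_le _ _) ?_)
      gcongr
      · simp [Nat.card_Icc]
      · exact Finset.card_biUnion_le
    have hc2 : (S.card : ℝ) ≤ (⌊x/2⌋₊:ℝ) + ∑ j ∈ Finset.range m, ((A j \ A' j).card : ℝ) := by
      exact_mod_cast hc1
    refine le_trans hc2 (le_of_eq ?_)
    congr 1
    refine Finset.sum_congr rfl (fun j _ => ?_)
    rw [Finset.card_sdiff_of_subset (hA'sub j), Nat.cast_sub (Finset.card_le_card (hA'sub j))]
  exact le_trans (Nat.cast_le.mpr h1) h3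


theorem phi_upper_bound_via_distribution (Φ : ℝ → ℝ)
    (hΦlim : ∀ l ∈ Set.Icc (0 : ℝ) 1,
      Tendsto (fun x : ℝ =>
          (((Finset.Icc 1 ⌊x⌋₊).filter
            (fun k => (Nat.totient k : ℝ) / k ≤ l)).card : ℝ) / x)
        atTop (nhds (Φ l)))
    (hΦmono : MonotoneOn Φ (Set.Icc (0 : ℝ) 1)) :
    limsup (fun x : ℝ => (Nplus Nat.totient x : ℝ) / x) atTop ≤
      1 / 2 + ∫ t in (0 : ℝ)..1, Φ t / (1 + t) ^ 2 := by
  have hΦlim' : ∀ l ∈ Set.Icc (0 : ℝ) 1,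
      Tendsto (fun x : ℝ => (cnt l x : ℝ) / x) atTop (nhds (Φ l)) := hΦlim
  have hΦ0 : ∀ l ∈ Set.Icc (0:ℝ) 1, 0 ≤ Φ l := by
    intro l hl
    refine ge_of_tendsto (hΦlim' l hl) ?_
    filter_upwards [eventually_gt_atTop (0:ℝ)] with x hx
    positivity
  have hΦ1 : ∀ l ∈ Set.Icc (0:ℝ) 1, Φ l ≤ 1 := by
    intro l hl
    refine le_of_tendsto (hΦlim' l hl) ?_
    filter_upwards [eventually_ge_atTop (1:ℝ)] with x hx
    have hx0 : (0:ℝ) < x := lt_of_lt_of_le one_pos hx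
    rw [div_le_one hx0]
    calc (cnt l x : ℝ) ≤ ((Finset.Icc 1 ⌊x⌋₊).card : ℝ) := by
          exact_mod_cast Finset.card_le_card (Finset.filter_subset _ _)
      _ = (⌊x⌋₊ : ℝ) := by rw [Nat.card_Icc]; simp
      _ ≤ x := Nat.floor_le hx0.le
  have key : ∀ m : ℕ, 0 < m →
      limsup (fun x : ℝ => (Nplus Nat.totient x : ℝ)/x) atTop ≤
        1/2 + ∑ j ∈ Finset.range m,
          (Φ (tt m (j+1))/(1+tt m j) - Φ (tt m (j+1))/(1+tt m (j+1))) := by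
    intro m hm
    have hmR : (0:ℝ) < m := by exact_mod_cast hm
    set g : ℝ → ℝ := fun x => (⌊x/2⌋₊:ℝ)/x + ∑ j ∈ Finset.range m,
      ((cnt (tt m (j+1)) (x/(1+tt m j)) : ℝ)/x
        - (cnt (tt m (j+1)) (x/(1+tt m (j+1))) : ℝ)/x) with hg
    have hgL : Tendsto g atTop (nhds (1/2 + ∑ j ∈ Finset.range m,
        (Φ (tt m (j+1))/(1+tt m j) - Φ (tt m (j+1))/(1+tt m (j+1))))) := by
      rw [hg]
      apply Tendsto.add tendsto_floor_half
      apply tendsto_finset_sum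
      intro j hj
      have hjm : j < m := Finset.mem_range.mp hj
      have hmem : tt m (j+1) ∈ Set.Icc (0:ℝ) 1 := by
        refine ⟨tt_nonneg m (j+1), ?_⟩
        rw [tt, div_le_one hmR]
        exact_mod_cast hjm
      have hc1 : (1:ℝ) ≤ 1 + tt m j := by have := tt_nonneg m j; linarith
      have hc2 : (1:ℝ) ≤ 1 + tt m (j+1) := by have := tt_nonneg m (j+1); linarith
      exact (tendsto_cnt_div (hΦlim' _ hmem) hc1).sub (tendsto_cnt_div (hΦlim' _ hmem) hc2)
    have hev : ∀ᶠ x in atTop, (Nplus Nat.totient x : ℝ)/x ≤ g x := by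
      filter_upwards [eventually_ge_atTop (1:ℝ)] with x hx
      have hx0 : (0:ℝ) < x := lt_of_lt_of_le one_pos hx
      have h := nplus_le m hm x hx
      have h2 : (Nplus Nat.totient x : ℝ)/x ≤
          ((⌊x/2⌋₊ : ℝ) + ∑ j ∈ Finset.range m,
            ((cnt (tt m (j+1)) (x / (1 + tt m j)) : ℝ) -
              (cnt (tt m (j+1)) (x / (1 + tt m (j+1))) : ℝ)))/x := by
        gcongr
      refine le_trans h2 (le_of_eq ?_)
      rw [hg]
      rw [add_div, Finset.sum_div]
      congr 1
      exact Finset.sum_congr rfl (fun j _ => sub_div _ _ _)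
    refine le_trans (limsup_le_limsup hev ?_ hgL.isBoundedUnder_le) (le_of_eq hgL.limsup_eq)
    apply isCoboundedUnder_le_of_eventually_le atTop (x := 0)
    filter_upwards [eventually_ge_atTop (1:ℝ)] with x hx
    have hx0 : (0:ℝ) < x := lt_of_lt_of_le one_pos hx
    positivity
  have hΦ00 := hΦ0 0 (by norm_num)
  have hΦ11 := hΦ1 1 (by norm_num)
  have hI : (∫ t in (0:ℝ)..1, Φ t / (1+t)^2) = ∫ t in (0:ℝ)..1, Φ t * ((1+t)^2)⁻¹ := by
    simp [div_eq_mul_inv]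
  rw [hI]
  have hlim : Tendsto (fun m : ℕ =>
      1/2 + ((∫ t in (0:ℝ)..1, Φ t * ((1+t)^2)⁻¹) + 1/(m:ℝ))) atTop
      (nhds (1/2 + ((∫ t in (0:ℝ)..1, Φ t * ((1+t)^2)⁻¹) + 0))) := by
    apply tendsto_const_nhds.add
    exact tendsto_const_nhds.add tendsto_one_div_atTop_nhds_zero_nat
  rw [show (1:ℝ)/2 + ((∫ t in (0:ℝ)..1, Φ t * ((1+t)^2)⁻¹) + 0)
      = 1/2 + (∫ t in (0:ℝ)..1, Φ t * ((1+t)^2)⁻¹) from by ring] at hlim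
  refine ge_of_tendsto hlim ?_
  filter_upwards [eventually_ge_atTop 1] with m hm
  have hb := riemann_bound Φ hΦmono hΦ00 hΦ11 m hm
  have := key m hm
  linarith
end

section
/- For all sufficiently large real x, the number of positive integers n ≤ x that can be written as n = k + φ(k) for some positive integer k is at most 0.93·x. -/
open Filter

section Aux
open Finset


-- Weierstrass product inequality
lemma weier (s : Finset ℕ) (f : ℕ → ℝ) (h0 : ∀ i ∈ s, 0 ≤ f i) (h1 : ∀ i ∈ s, f i ≤ 1) :
    1 - ∑ i ∈ s, f i ≤ ∏ i ∈ s, (1 - f i) := by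
  induction s using Finset.induction with
  | empty => simp
  | @insert a s ha ih =>
    rw [Finset.sum_insert ha, Finset.prod_insert ha]
    have h0a := h0 a (Finset.mem_insert_self a s)
    have h1a := h1 a (Finset.mem_insert_self a s)
    have ih' := ih (fun i hi => h0 i (Finset.mem_insert_of_mem hi))
      (fun i hi => h1 i (Finset.mem_insert_of_mem hi))
    have hs0 : 0 ≤ ∑ i ∈ s, f i := Finset.sum_nonneg fun i hi => h0 i (Finset.mem_insert_of_mem hi)
    nlinarith

-- real totient formula
lemma totient_real (k : ℕ) :
    (Nat.totient k : ℝ) = k * ∏ p ∈ k.primeFactors, (1 - (p : ℝ)⁻¹) := by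
  have h := Nat.totient_eq_mul_prod_factors k
  have := congrArg (Rat.cast : ℚ → ℝ) h
  push_cast at this
  exact_mod_cast this

lemma bad_sum (k : ℕ) (hk : 0 < k) (hbad : 2 * Nat.totient k ≤ k) :
    (1 : ℝ) ≤ 2 * ∑ p ∈ k.primeFactors, ((p : ℝ))⁻¹ := by
  have hfor := totient_real k
  have hP : ∏ p ∈ k.primeFactors, (1 - (p : ℝ)⁻¹) ≤ 1/2 := by
    have hk' : (0:ℝ) < k := by exact_mod_cast hk
    have h2 : (2:ℝ) * Nat.totient k ≤ k := by exact_mod_cast hbad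
    rw [hfor] at h2
    nlinarith
  have hW := weier k.primeFactors (fun p => (p:ℝ)⁻¹)
    (fun p hp => by positivity)
    (fun p hp => by
      have : 1 ≤ p := (Nat.pos_of_mem_primeFactors hp)
      have : (1:ℝ) ≤ p := by exact_mod_cast this
      rw [inv_le_one_iff₀]; right; exact this)
  linarith


lemma odd_range (n : ℕ) : ((Finset.range n).filter (fun k => k % 2 = 1)).card = n / 2 := by
  induction n with
  | zero => simp
  | succ n ih =>
    rw [Finset.range_add_one, Finset.filter_insert]
    by_cases h : n % 2 = 1
    · rw [if_pos h, Finset.card_insert_of_notMem (by simp)]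
      omega
    · rw [if_neg h]; omega

lemma odd_Ioc (u v : ℕ) (h : u ≤ v) :
    (u+1)/2 + ((Finset.Ioc u v).filter (fun k => k % 2 = 1)).card = (v+1)/2 := by
  have hsplit : Finset.range (v+1) = Finset.range (u+1) ∪ Finset.Ioc u v := by
    ext k; simp only [Finset.mem_range, Finset.mem_union, Finset.mem_Ioc]; omega
  have hdisj : Disjoint (Finset.range (u+1)) (Finset.Ioc u v) := by
    simp only [Finset.disjoint_left, Finset.mem_range, Finset.mem_Ioc]
    intro k hk; omega
  have := odd_range (v+1)
  rw [hsplit, Finset.filter_union,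
    Finset.card_union_of_disjoint (Finset.disjoint_filter_filter hdisj), odd_range] at this
  omega

lemma card_mult (p a m : ℕ) (hp : 0 < p) :
    ((Finset.Ioc a m).filter (fun k => k % 2 = 1 ∧ p ∣ k)).card
      ≤ ((Finset.Ioc (a/p) (m/p)).filter (fun j => j % 2 = 1)).card := by
  apply Finset.card_le_card_of_injOn (fun k => k / p)
  · intro k hk
    simp only [Finset.mem_coe, Finset.mem_filter, Finset.mem_Ioc] at hk ⊢
    obtain ⟨⟨hak, hkm⟩, hodd, hdvd⟩ := hk
    obtain ⟨j, rfl⟩ := hdvd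
    rw [Nat.mul_div_cancel_left j hp]
    refine ⟨⟨?_, ?_⟩, ?_⟩
    · rw [Nat.div_lt_iff_lt_mul hp, mul_comm]; exact hak
    · rw [Nat.le_div_iff_mul_le hp, mul_comm]; exact hkm
    · rcases Nat.even_or_odd j with he | ho
      · exfalso; obtain ⟨t, rfl⟩ := he
        have h2 : p * (t + t) = 2 * (p * t) := by ring
        omega
      · exact Nat.odd_iff.mp ho
  · intro k1 h1 k2 h2 heq
    simp only [Finset.mem_coe, Finset.mem_filter, Finset.mem_Ioc] at h1 h2
    obtain ⟨-, -, hd1⟩ := h1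
    obtain ⟨-, -, hd2⟩ := h2
    have e1 := Nat.div_mul_cancel hd1
    have e2 := Nat.div_mul_cancel hd2
    simp only at heq
    rw [← e1, ← e2, heq]



lemma invsq_tail (m : ℕ) : ∑ n ∈ Finset.Icc 11 m, (((n:ℝ))⁻¹)^2 ≤ 1/10 := by
  rcases le_or_gt m 10 with h | h
  · rw [Finset.Icc_eq_empty (by omega)]; norm_num
  · have key : ∀ M : ℕ, 10 ≤ M → ∑ n ∈ Finset.Icc 11 M, (((n:ℝ))⁻¹)^2 ≤ 1/10 - (M:ℝ)⁻¹ := by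
      intro M hM
      induction M, hM using Nat.le_induction with
      | base => rw [Finset.Icc_eq_empty (by omega)]; norm_num
      | succ M hM ih =>
        rw [Finset.sum_Icc_succ_top (by omega : 11 ≤ M + 1)]
        have hM0 : (0:ℝ) < M := by
          have : (0:ℕ) < M := by omega
          exact_mod_cast this
        have hM1 : (0:ℝ) < (M:ℝ) + 1 := by linarith
        have hstep : (((M:ℝ) + 1)⁻¹)^2 ≤ (M:ℝ)⁻¹ - ((M:ℝ)+1)⁻¹ := by
          have e1 : (M:ℝ)⁻¹ - ((M:ℝ)+1)⁻¹ = ((M:ℝ)*((M:ℝ)+1))⁻¹ := by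
            field_simp
            ring
          rw [e1, inv_pow]
          apply inv_anti₀ (by positivity)
          nlinarith
        push_cast
        push_cast at ih
        linarith
    have := key m (by omega)
    have h0 : (0:ℝ) < (m:ℝ)⁻¹ := by positivity
    linarith

lemma harm_sqrt (m : ℕ) : ∑ n ∈ Finset.Icc 1 m, ((n:ℝ))⁻¹ ≤ 2 * Real.sqrt m := by
  induction m with
  | zero => simp
  | succ m ih =>
    rw [Finset.sum_Icc_succ_top (by omega : 1 ≤ m + 1)]
    have hs : Real.sqrt m ^ 2 = m := Real.sq_sqrt (by positivity)
    have ht : Real.sqrt ((m:ℝ)+1) ^ 2 = (m:ℝ)+1 := Real.sq_sqrt (by positivity)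
    have hs0 : 0 ≤ Real.sqrt m := Real.sqrt_nonneg _
    have ht0 : 0 ≤ Real.sqrt ((m:ℝ)+1) := Real.sqrt_nonneg _
    have ht1 : 1 ≤ Real.sqrt ((m:ℝ)+1) := by nlinarith [ht, ht0]
    have hts : Real.sqrt m ≤ Real.sqrt ((m:ℝ)+1) := Real.sqrt_le_sqrt (by linarith)
    have hM1 : (0:ℝ) < (m:ℝ) + 1 := by positivity
    have hkey : ((m:ℝ)+1)⁻¹ ≤ 2 * (Real.sqrt ((m:ℝ)+1) - Real.sqrt m) := by
      rw [inv_le_iff_one_le_mul₀ hM1]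
      nlinarith [ht, hs, ht1, hs0, hts, mul_nonneg (sub_nonneg.mpr hts) (sub_nonneg.mpr ht1)]
    push_cast
    push_cast at ih
    have : Real.sqrt ((m:ℝ)+1) = Real.sqrt ((m:ℕ):ℝ) + (Real.sqrt ((m:ℝ)+1) - Real.sqrt m) := by ring
    linarith

lemma prime_ge_11 (p : ℕ) (hp : p.Prime) (h2 : p ≠ 2) (h3 : p ≠ 3) (h5 : p ≠ 5) (h7 : p ≠ 7) :
    11 ≤ p := by
  by_contra hlt
  push_neg at hlt
  interval_cases p <;> revert hp <;> first | omega | decide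

lemma bad_bound (a m : ℕ) (ham : a ≤ m) :
    (((Finset.Ioc a m).filter (fun k => k % 2 = 1 ∧ 2 * Nat.totient k ≤ k)).card : ℝ)
      ≤ ((m - a : ℕ) : ℝ) * (1/9 + 1/25 + 1/49 + 1/10) + 4 * Real.sqrt m := by
  set Bad := (Finset.Ioc a m).filter (fun k => k % 2 = 1 ∧ 2 * Nat.totient k ≤ k) with hBad
  have hmem : ∀ k ∈ Bad, a < k ∧ k ≤ m ∧ k % 2 = 1 ∧ 2 * Nat.totient k ≤ k := by
    intro k hk
    simp only [hBad, Finset.mem_filter, Finset.mem_Ioc] at hk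
    tauto
  -- Step A
  have stepA : (Bad.card : ℝ) ≤ 2 * ∑ k ∈ Bad, ∑ p ∈ k.primeFactors, ((p:ℝ))⁻¹ := by
    have h1 : (Bad.card : ℝ) = ∑ k ∈ Bad, (1:ℝ) := by simp
    rw [h1, Finset.mul_sum]
    apply Finset.sum_le_sum
    intro k hk
    obtain ⟨ha, hm, ho, hb⟩ := hmem k hk
    exact bad_sum k (by omega) hb
  -- Step B : swap
  have hpf : ∀ k ∈ Bad, k.primeFactors ⊆ Finset.range (m+1) := by
    intro k hk p hp
    have hkm := (hmem k hk).2.1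
    have := Nat.le_of_mem_primeFactors hp
    simp only [Finset.mem_range]; omega
  have swap : ∑ k ∈ Bad, ∑ p ∈ k.primeFactors, ((p:ℝ))⁻¹
      = ∑ p ∈ Finset.range (m+1),
          ((Bad.filter (fun k => p ∈ k.primeFactors)).card : ℝ) * (p:ℝ)⁻¹ := by
    have hrw : ∀ k ∈ Bad, ∑ p ∈ k.primeFactors, ((p:ℝ))⁻¹
        = ∑ p ∈ Finset.range (m+1), if p ∈ k.primeFactors then ((p:ℝ))⁻¹ else 0 := by
      intro k hk
      rw [Finset.sum_ite_mem, Finset.inter_eq_right.mpr (hpf k hk)]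
    rw [Finset.sum_congr rfl hrw, Finset.sum_comm]
    apply Finset.sum_congr rfl
    intro p _
    rw [← Finset.sum_filter, Finset.sum_const, nsmul_eq_mul]
  -- Step C : restrict to odd primes
  set Pset := (Finset.range (m+1)).filter (fun p => p.Prime ∧ p ≠ 2) with hPset
  have hzero : ∀ p ∈ Finset.range (m+1), p ∉ Pset →
      ((Bad.filter (fun k => p ∈ k.primeFactors)).card : ℝ) * (p:ℝ)⁻¹ = 0 := by
    intro p hp hnp
    have hempty : Bad.filter (fun k => p ∈ k.primeFactors) = ∅ := by
      rw [Finset.filter_eq_empty_iff]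
      intro k hk hpk
      have hprime := Nat.prime_of_mem_primeFactors hpk
      have hdvd := Nat.dvd_of_mem_primeFactors hpk
      have hp2 : p = 2 := by
        by_contra hne
        exact hnp (by simp only [hPset, Finset.mem_filter]; exact ⟨hp, hprime, hne⟩)
      subst hp2
      have := (hmem k hk).2.2.1
      omega
    rw [hempty]; simp
  -- termwise bound
  have hterm : ∀ p ∈ Pset,
      ((Bad.filter (fun k => p ∈ k.primeFactors)).card : ℝ) * (p:ℝ)⁻¹
        ≤ ((m - a : ℕ):ℝ)/2 * ((p:ℝ)⁻¹)^2 + (p:ℝ)⁻¹ := by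
    intro p hp
    simp only [hPset, Finset.mem_filter, Finset.mem_range] at hp
    obtain ⟨hpm, hprime, hne2⟩ := hp
    have hp0 : 0 < p := hprime.pos
    have hsub : Bad.filter (fun k => p ∈ k.primeFactors)
        ⊆ (Finset.Ioc a m).filter (fun k => k % 2 = 1 ∧ p ∣ k) := by
      intro k hk
      simp only [Finset.mem_filter] at hk
      obtain ⟨hkB, hpk⟩ := hk
      obtain ⟨ha, hm, ho, _⟩ := hmem k hkB
      simp only [Finset.mem_filter, Finset.mem_Ioc]
      exact ⟨⟨ha, hm⟩, ho, Nat.dvd_of_mem_primeFactors hpk⟩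
    have h1 := le_trans (Finset.card_le_card hsub) (card_mult p a m hp0)
    have h2 := odd_Ioc (a/p) (m/p) (Nat.div_le_div_right ham)
    have h3 : m/p ≤ a/p + (m-a)/p + 1 := by
      have ha' : a < (a/p + 1) * p := (Nat.div_lt_iff_lt_mul hp0).mp (Nat.lt_succ_self _)
      have hb' : m - a < ((m-a)/p + 1) * p := (Nat.div_lt_iff_lt_mul hp0).mp (Nat.lt_succ_self _)
      have hm' : m < (a/p + ((m-a)/p + 1) + 1) * p := by
        calc m = a + (m - a) := by omega
          _ < (a/p + 1) * p + ((m-a)/p + 1) * p := Nat.add_lt_add ha' hb'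
          _ = (a/p + ((m-a)/p + 1) + 1) * p := by ring
      exact Nat.lt_succ_iff.mp ((Nat.div_lt_iff_lt_mul hp0).mpr hm')
    have h4 : (Bad.filter (fun k => p ∈ k.primeFactors)).card ≤ (m-a)/p/2 + 1 := by
      have key : ∀ d C u v w : ℕ, d ≤ C → (u+1)/2 + C = (v+1)/2 → v ≤ u + w + 1 →
          d ≤ w/2 + 1 := by intro d C u v w hd hC hvu; omega
      exact key _ _ _ _ _ h1 h2 h3
    have h5 : (((m-a)/p : ℕ) : ℝ) ≤ ((m-a:ℕ):ℝ) * (p:ℝ)⁻¹ := by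
      rw [← div_eq_mul_inv]; exact Nat.cast_div_le
    have hpinv : (0:ℝ) ≤ (p:ℝ)⁻¹ := by positivity
    have h6 : ((Bad.filter (fun k => p ∈ k.primeFactors)).card : ℝ)
        ≤ ((m-a:ℕ):ℝ) * (p:ℝ)⁻¹ / 2 + 1 := by
      have : ((Bad.filter (fun k => p ∈ k.primeFactors)).card : ℝ) ≤ (((m-a)/p/2 + 1 : ℕ) : ℝ) := by
        exact_mod_cast h4
      have h7 : (((m-a)/p/2 : ℕ) : ℝ) ≤ (((m-a)/p : ℕ) : ℝ)/2 := by
        have := Nat.cast_div_le (α := ℝ) (m := (m-a)/p) (n := 2)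
        push_cast at this ⊢
        linarith
      push_cast at this
      linarith
    calc ((Bad.filter (fun k => p ∈ k.primeFactors)).card : ℝ) * (p:ℝ)⁻¹
        ≤ (((m-a:ℕ):ℝ) * (p:ℝ)⁻¹ / 2 + 1) * (p:ℝ)⁻¹ := by
          apply mul_le_mul_of_nonneg_right h6 hpinv
      _ = ((m - a : ℕ):ℝ)/2 * ((p:ℝ)⁻¹)^2 + (p:ℝ)⁻¹ := by ring
  have hsum := Finset.sum_le_sum hterm
  -- split sum
  rw [Finset.sum_add_distrib] at hsum
  have hS2 : ∑ p ∈ Pset, ((m - a : ℕ):ℝ)/2 * ((p:ℝ)⁻¹)^2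
      = ((m - a : ℕ):ℝ)/2 * ∑ p ∈ Pset, ((p:ℝ)⁻¹)^2 := by
    rw [Finset.mul_sum]
  have hPsub : Pset ⊆ insert 3 (insert 5 (insert 7 (Finset.Icc 11 m))) := by
    intro p hp
    simp only [hPset, Finset.mem_filter, Finset.mem_range] at hp
    obtain ⟨hpm, hprime, hne2⟩ := hp
    simp only [Finset.mem_insert, Finset.mem_Icc]
    by_contra hcon
    push_neg at hcon
    obtain ⟨h3', h5', h7', h11⟩ := hcon
    have := prime_ge_11 p hprime hne2 h3' h5' h7'
    omega
  have hS2b : ∑ p ∈ Pset, ((p:ℝ)⁻¹)^2 ≤ 1/9 + 1/25 + 1/49 + 1/10 := by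
    have hle := Finset.sum_le_sum_of_subset_of_nonneg hPsub
      (fun p _ _ => by positivity : ∀ p ∈ insert 3 (insert 5 (insert 7 (Finset.Icc 11 m))),
        p ∉ Pset → (0:ℝ) ≤ ((p:ℝ)⁻¹)^2)
    have e1 : ∑ p ∈ insert 3 (insert 5 (insert 7 (Finset.Icc 11 m))), ((p:ℝ)⁻¹)^2
        = ((3:ℝ)⁻¹)^2 + (((5:ℝ)⁻¹)^2 + (((7:ℝ)⁻¹)^2 + ∑ n ∈ Finset.Icc 11 m, (((n:ℝ))⁻¹)^2)) := by
      rw [Finset.sum_insert (by simp only [Finset.mem_insert, Finset.mem_Icc]; omega),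
          Finset.sum_insert (by simp only [Finset.mem_insert, Finset.mem_Icc]; omega),
          Finset.sum_insert (by simp only [Finset.mem_Icc]; omega)]
      norm_num
    have htail := invsq_tail m
    rw [e1] at hle
    have e2 : ((3:ℝ)⁻¹)^2 = 1/9 := by norm_num
    have e3 : ((5:ℝ)⁻¹)^2 = 1/25 := by norm_num
    have e4 : ((7:ℝ)⁻¹)^2 = 1/49 := by norm_num
    rw [e2, e3, e4] at hle
    linarith
  have hS1 : ∑ p ∈ Pset, ((p:ℝ))⁻¹ ≤ 2 * Real.sqrt m := by
    have hsub1 : Pset ⊆ Finset.Icc 1 m := by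
      intro p hp
      simp only [hPset, Finset.mem_filter, Finset.mem_range] at hp
      simp only [Finset.mem_Icc]
      exact ⟨hp.2.1.pos, by omega⟩
    exact le_trans (Finset.sum_le_sum_of_subset_of_nonneg hsub1
      (fun p _ _ => by positivity)) (harm_sqrt m)
  have hL0 : (0:ℝ) ≤ ((m - a : ℕ):ℝ) := by positivity
  calc (Bad.card : ℝ) ≤ 2 * ∑ k ∈ Bad, ∑ p ∈ k.primeFactors, ((p:ℝ))⁻¹ := stepA
    _ = 2 * ∑ p ∈ Pset, ((Bad.filter (fun k => p ∈ k.primeFactors)).card : ℝ) * (p:ℝ)⁻¹ := by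
        rw [swap, ← Finset.sum_subset (Finset.filter_subset _ _) hzero]
    _ ≤ 2 * (((m - a : ℕ):ℝ)/2 * ∑ p ∈ Pset, ((p:ℝ)⁻¹)^2 + ∑ p ∈ Pset, ((p:ℝ))⁻¹) := by
        rw [hS2] at hsum; linarith
    _ ≤ 2 * (((m - a : ℕ):ℝ)/2 * (1/9 + 1/25 + 1/49 + 1/10) + 2 * Real.sqrt m) := by
        have := mul_le_mul_of_nonneg_left hS2b (by linarith : (0:ℝ) ≤ ((m - a : ℕ):ℝ)/2)
        linarith
    _ = ((m - a : ℕ):ℝ) * (1/9 + 1/25 + 1/49 + 1/10) + 4 * Real.sqrt m := by ring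

end Aux

theorem numbers_of_form_k_plus_phi_upper :
    ∀ᶠ x : ℝ in atTop,
      (Nplus Nat.totient x : ℝ) ≤ 0.93 * x := by
  filter_upwards [eventually_ge_atTop (1000000 : ℝ)] with x hx
  have hx0 : (0:ℝ) ≤ x := by linarith
  set m := ⌊x⌋₊ with hm
  have hm1 : (1000000 : ℕ) ≤ m := Nat.le_floor (by exact_mod_cast hx)
  have hmx : (m : ℝ) ≤ x := Nat.floor_le hx0
  have hmR : (1000000 : ℝ) ≤ (m:ℝ) := by exact_mod_cast hm1
  -- step 1 : injection into k's with k + φ k ≤ m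
  set T := (Finset.Icc 1 m).filter (fun k => k + Nat.totient k ≤ m) with hT
  have step1 : Nplus Nat.totient x ≤ T.card := by
    classical
    unfold Nplus
    apply Finset.card_le_card_of_injOn
      (fun n => if h : ∃ k : ℕ, 0 < k ∧ n = k + Nat.totient k then h.choose else 0)
    · intro n hn
      simp only [Finset.mem_coe, Finset.mem_filter, Finset.mem_Icc] at hn
      obtain ⟨⟨h1n, hnm⟩, hex⟩ := hn
      beta_reduce
      rw [dif_pos hex]
      obtain ⟨hpos, hrep⟩ := hex.choose_spec
      simp only [hT, Finset.mem_coe, Finset.mem_filter, Finset.mem_Icc]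
      refine ⟨⟨hpos, ?_⟩, ?_⟩ <;> omega
    · intro n1 hn1 n2 hn2 heq
      simp only [Finset.mem_coe, Finset.mem_filter, Finset.mem_Icc] at hn1 hn2
      obtain ⟨-, hex1⟩ := hn1
      obtain ⟨-, hex2⟩ := hn2
      simp only at heq
      rw [dif_pos hex1, dif_pos hex2] at heq
      obtain ⟨-, hrep1⟩ := hex1.choose_spec
      obtain ⟨-, hrep2⟩ := hex2.choose_spec
      rw [hrep1, hrep2, heq]
  -- step 2 : complement
  set G := (Finset.Icc 1 m).filter (fun k => ¬ (k + Nat.totient k ≤ m)) with hG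
  have step2 : T.card + G.card = m := by
    rw [hT, hG, Finset.card_filter_add_card_filter_not, Nat.card_Icc]
    omega
  -- step 3 : good odd k
  set a := 2*m/3 with ha
  have ham : a ≤ m := by omega
  set OddI := (Finset.Ioc a m).filter (fun k => k % 2 = 1) with hOddI
  set GoodF := OddI.filter (fun k => k < 2 * Nat.totient k) with hGoodF
  set BadF := OddI.filter (fun k => ¬ k < 2 * Nat.totient k) with hBadF
  have hpart : GoodF.card + BadF.card = OddI.card := by
    rw [hGoodF, hBadF, Finset.card_filter_add_card_filter_not]
  have hGsub : GoodF ⊆ G := by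
    intro k hk
    simp only [hGoodF, hOddI, Finset.mem_filter, Finset.mem_Ioc] at hk
    obtain ⟨⟨⟨hak, hkm⟩, hodd⟩, hgood⟩ := hk
    simp only [hG, Finset.mem_filter, Finset.mem_Icc]
    refine ⟨⟨?_, hkm⟩, ?_⟩ <;> omega
  have hBadeq : BadF = (Finset.Ioc a m).filter (fun k => k % 2 = 1 ∧ 2 * Nat.totient k ≤ k) := by
    rw [hBadF, hOddI, Finset.filter_filter]
    apply Finset.filter_congr
    intro k _
    constructor
    · rintro ⟨h1, h2⟩; exact ⟨h1, by omega⟩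
    · rintro ⟨h1, h2⟩; exact ⟨h1, by omega⟩
  have hBadcard : (BadF.card : ℝ)
      ≤ ((m - a : ℕ) : ℝ) * (1/9 + 1/25 + 1/49 + 1/10) + 4 * Real.sqrt m := by
    rw [hBadeq]; exact bad_bound a m ham
  have hOddcard := odd_Ioc a m ham
  rw [← hOddI] at hOddcard
  -- numeric facts
  have hL3 : m ≤ 3 * (m - a) := by omega
  have hO2 : (m - a) ≤ 2 * OddI.card + 2 := by omega
  have hLR : (m:ℝ) ≤ 3 * ((m - a : ℕ):ℝ) := by exact_mod_cast hL3
  have hOR : ((m - a : ℕ):ℝ) ≤ 2 * (OddI.card:ℝ) + 2 := by exact_mod_cast hO2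
  have hsqrt : Real.sqrt m ≤ (m:ℝ)/1000 := by
    rw [show ((m:ℝ)/1000) = Real.sqrt (((m:ℝ)/1000)^2) from (Real.sqrt_sq (by positivity)).symm]
    apply Real.sqrt_le_sqrt
    nlinarith
  have hGoodR : (0.07 : ℝ) * m ≤ (GoodF.card : ℝ) := by
    have hpartR : (GoodF.card:ℝ) + (BadF.card:ℝ) = (OddI.card:ℝ) := by exact_mod_cast hpart
    nlinarith [hBadcard, hLR, hOR, hsqrt, hmR]
  -- final
  have hfin1 : (Nplus Nat.totient x : ℝ) + (G.card : ℝ) ≤ (m:ℝ) := by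
    have h := Nat.add_le_add_right step1 G.card
    rw [step2] at h
    exact_mod_cast h
  have hfin2 : (GoodF.card : ℝ) ≤ (G.card : ℝ) := by
    exact_mod_cast Finset.card_le_card hGsub
  have : (0.93:ℝ) * m ≤ 0.93 * x := by nlinarith
  linarith
end

section
/- For every complex number s with Re(s) > 1, the Dirichlet series ∑ 1/kˢ, taken over positive integers k with gcd(k, 3) = 1 and τ(k) not divisible by 3, equals (ζ(s)·ζ(3s)/ζ(2s)) · (1 − 27^{−s})/(1 + 3^{−s}). -/
/-!
Write `1_A` for the indicator function of `A ⊆ ℕ`. Since `τ(p ^ e) = e + 1`, a check at prime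
powers gives `1_squarefree * 1_cubes = 1_{3 ∤ τ}` and `1_squarefree * 1_squares = 1`, hence
`1_{3 ∤ τ} * 1_squares = 1 * 1_cubes`. Pointwise multiplication by the principal character `χ₀`
mod 3 is a ring endomorphism for Dirichlet convolution, because `χ₀` is completely multiplicative.
Taking L-series gives `L(s) · L(2s, χ₀) = L(s, χ₀) · L(3s, χ₀)` with `L(s, χ₀) = (1 - 3⁻ˢ) ζ(s)`.
-/

open ArithmeticFunction LSeries Finset
open scoped LSeries.notation ArithmeticFunction.zeta

lemma Nat.Prime.exists_pow_eq_pow_iff {p : ℕ} (hp : p.Prime) {r : ℕ} (hr : r ≠ 0) (i : ℕ) :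
    (∃ m, m ^ r = p ^ i) ↔ r ∣ i := by
  constructor
  · rintro ⟨m, hm⟩
    obtain ⟨j, -, rfl⟩ := (Nat.dvd_prime_pow hp).mp (hm ▸ dvd_pow_self m hr)
    rw [← pow_mul] at hm
    exact ⟨j, (Nat.pow_right_injective hp.two_le hm).symm.trans (mul_comm j r)⟩
  · rintro ⟨j, rfl⟩
    exact ⟨p ^ j, by rw [← pow_mul, mul_comm]⟩

lemma DirichletCharacter.LSeries_one_eq_of_prime {p : ℕ} (hp : p.Prime) {s : ℂ}
    (hs : 1 < s.re) :
    LSeries ↗(1 : DirichletCharacter ℂ p) s = (1 - (p : ℂ) ^ (-s)) * riemannZeta s := by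
  have : NeZero p := ⟨hp.ne_zero⟩
  rw [← DirichletCharacter.LFunction_eq_LSeries _ hs, ← DirichletCharacter.LFunctionTrivChar,
    DirichletCharacter.LFunctionTrivChar_eq_mul_riemannZeta (by rintro rfl; simp at hs),
    hp.primeFactors, prod_singleton]

namespace ArithmeticFunction

variable {R : Type*}

open scoped Classical in
noncomputable def indicatorOf [Zero R] [One R] (P : ℕ → Prop) : ArithmeticFunction R :=
  toArithmeticFunction fun n => if P n then 1 else 0

section indicatorOf

variable {P Q : ℕ → Prop} {n : ℕ}

open scoped Classical in
lemma indicatorOf_apply [Zero R] [One R] (hn : n ≠ 0) :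
    (indicatorOf P n : R) = if P n then 1 else 0 := by
  simp [indicatorOf, toArithmeticFunction, hn]

lemma indicatorOf_apply_of_prop [Zero R] [One R] (hn : n ≠ 0) (h : P n) :
    (indicatorOf P n : R) = 1 := by
  rw [indicatorOf_apply hn, if_pos h]

lemma indicatorOf_apply_of_not [Zero R] [One R] (h : ¬ P n) : (indicatorOf P n : R) = 0 := by
  rcases eq_or_ne n 0 with rfl | hn
  · simp
  · rw [indicatorOf_apply hn, if_neg h]

lemma pmul_indicatorOf [MulZeroOneClass R] :
    (indicatorOf P).pmul (indicatorOf Q) =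
      (indicatorOf (fun n => P n ∧ Q n) : ArithmeticFunction R) := by
  ext n
  rcases eq_or_ne n 0 with rfl | hn
  · simp
  · rw [pmul_apply, indicatorOf_apply hn, indicatorOf_apply hn, indicatorOf_apply hn]
    split_ifs <;> simp_all

lemma indicatorOf_mul_apply [MulZeroOneClass R] {m n : ℕ} (h : P (m * n) ↔ P m ∧ P n) :
    (indicatorOf P (m * n) : R) = indicatorOf P m * indicatorOf P n := by
  rcases eq_or_ne m 0 with rfl | hm
  · simp
  rcases eq_or_ne n 0 with rfl | hn
  · simp
  rw [indicatorOf_apply (mul_ne_zero hm hn), indicatorOf_apply hm, indicatorOf_apply hn]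
  split_ifs <;> simp_all

lemma isMultiplicative_indicatorOf [MonoidWithZero R] (h1 : P 1)
    (h : ∀ {m n}, m.Coprime n → (P (m * n) ↔ P m ∧ P n)) :
    (indicatorOf P : ArithmeticFunction R).IsMultiplicative :=
  ⟨indicatorOf_apply_of_prop one_ne_zero h1, fun hmn => indicatorOf_mul_apply (h hmn)⟩

lemma LSeriesSummable_indicatorOf (P : ℕ → Prop) {s : ℂ} (hs : 1 < s.re) :
    LSeriesSummable ↗(indicatorOf P : ArithmeticFunction ℂ) s :=
  LSeriesSummable_of_bounded_of_one_lt_re (m := 1)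
    (fun n hn => by rw [indicatorOf_apply hn]; split_ifs <;> simp) hs

lemma LSeries_indicatorOf (P : ℕ → Prop) [DecidablePred P] (s : ℂ) :
    LSeries ↗(indicatorOf P : ArithmeticFunction ℂ) s =
      ∑' k : ℕ, if 0 < k ∧ P k then 1 / (k : ℂ) ^ s else 0 := by
  refine tsum_congr fun k => ?_
  rcases eq_or_ne k 0 with rfl | hk
  · simp
  · rw [term_of_ne_zero hk, indicatorOf_apply hk]
    split_ifs <;> simp_all [Nat.pos_of_ne_zero hk]

end indicatorOf

lemma pmul_mul_pmul [CommSemiring R] {c : ArithmeticFunction R}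
    (hc : ∀ m n, c (m * n) = c m * c n) (f g : ArithmeticFunction R) :
    c.pmul f * c.pmul g = c.pmul (f * g) := by
  ext n
  simp only [mul_apply, pmul_apply, Finset.mul_sum]
  refine sum_congr rfl fun x hx => ?_
  rw [← (Nat.mem_divisorsAntidiagonal.mp hx).1, hc]
  ring

lemma mul_apply_prime_pow [Semiring R] (f g : ArithmeticFunction R) {p : ℕ} (hp : p.Prime)
    (k : ℕ) : (f * g) (p ^ k) = ∑ i ∈ range (k + 1), f (p ^ i) * g (p ^ (k - i)) := by
  rw [mul_apply, Nat.sum_divisorsAntidiagonal (f := fun x y => f x * g y),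
    Nat.sum_divisors_prime_pow hp]
  refine sum_congr rfl fun i hi => ?_
  rw [Nat.pow_div (Nat.lt_succ_iff.mp (mem_range.mp hi)) hp.pos]

open scoped Classical in
noncomputable def powIndicator [Zero R] [One R] (r : ℕ) : ArithmeticFunction R :=
  indicatorOf fun n => ∃ m, m ^ r = n

lemma isMultiplicative_powIndicator [MonoidWithZero R] (r : ℕ) :
    (powIndicator r : ArithmeticFunction R).IsMultiplicative := by
  refine isMultiplicative_indicatorOf ⟨1, one_pow r⟩ fun {m n} hmn => ?_
  constructor
  · rintro ⟨k, hk⟩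
    exact ⟨(exists_eq_pow_of_mul_eq_pow (Nat.isUnit_iff.mpr hmn) hk.symm).imp fun _ h => h.symm,
      (exists_eq_pow_of_mul_eq_pow (Nat.isUnit_iff.mpr hmn.symm)
        (by rw [mul_comm, hk])).imp fun _ h => h.symm⟩
  · rintro ⟨⟨a, rfl⟩, ⟨b, rfl⟩⟩
    exact ⟨a * b, mul_pow a b r⟩

lemma powIndicator_apply_prime_pow [Zero R] [One R] {p : ℕ} (hp : p.Prime) {r : ℕ}
    (hr : r ≠ 0) (i : ℕ) :
    (powIndicator r (p ^ i) : R) = if r ∣ i then 1 else 0 := by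
  simp only [powIndicator, indicatorOf_apply (pow_ne_zero i hp.ne_zero),
    hp.exists_pow_eq_pow_iff hr]

lemma isMultiplicative_indicatorOf_squarefree [MonoidWithZero R] :
    (indicatorOf Squarefree : ArithmeticFunction R).IsMultiplicative :=
  isMultiplicative_indicatorOf squarefree_one fun h => Nat.squarefree_mul h

lemma indicatorOf_squarefree_apply_prime_pow [Zero R] [One R] {p : ℕ} (hp : p.Prime) (i : ℕ) :
    (indicatorOf Squarefree (p ^ i) : R) = if i ≤ 1 then 1 else 0 := by
  rw [indicatorOf_apply (pow_ne_zero i hp.ne_zero)]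
  rcases eq_or_ne i 0 with rfl | hi
  · simp
  · simp [Nat.squarefree_pow_iff hp.ne_one hi, hp.squarefree, show i ≤ 1 ↔ i = 1 by omega]

lemma indicatorOf_squarefree_mul_apply_prime_pow_succ [Semiring R] (g : ArithmeticFunction R)
    {p : ℕ} (hp : p.Prime) (k : ℕ) :
    (indicatorOf Squarefree * g : ArithmeticFunction R) (p ^ (k + 1)) =
      g (p ^ (k + 1)) + g (p ^ k) := by
  simp only [mul_apply_prime_pow _ _ hp, sum_range_succ' _ (k + 1), sum_range_succ' _ k,
    indicatorOf_squarefree_apply_prime_pow hp]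
  simp [add_comm]

lemma isMultiplicative_indicatorOf_not_dvd_card_divisors [MonoidWithZero R] {q : ℕ}
    (hq : q.Prime) :
    (indicatorOf (fun n => ¬ q ∣ #n.divisors) : ArithmeticFunction R).IsMultiplicative := by
  refine isMultiplicative_indicatorOf (by simpa using hq.ne_one) fun {m n} hmn => ?_
  rw [Nat.Coprime.card_divisors_mul hmn, hq.dvd_mul, not_or]

lemma indicatorOf_squarefree_mul_powIndicator_two [CommSemiring R] :
    indicatorOf Squarefree * powIndicator 2 = (ζ : ArithmeticFunction R) := by
  have hL := isMultiplicative_indicatorOf_squarefree.mul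
    (isMultiplicative_powIndicator (R := R) 2)
  have hR := isMultiplicative_zeta.natCast (R := R)
  refine (hL.eq_iff_eq_on_prime_powers _ _ hR).mpr fun p i hp => ?_
  cases i with
  | zero => rw [pow_zero, hL.map_one, hR.map_one]
  | succ k =>
    rw [indicatorOf_squarefree_mul_apply_prime_pow_succ _ hp,
      powIndicator_apply_prime_pow hp two_ne_zero, powIndicator_apply_prime_pow hp two_ne_zero,
      natCoe_apply, zeta_apply, if_neg (pow_ne_zero _ hp.ne_zero)]
    split_ifs <;> first | omega | simp

lemma indicatorOf_squarefree_mul_powIndicator_three [CommSemiring R] :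
    indicatorOf Squarefree * powIndicator 3 =
      (indicatorOf (fun n => ¬ 3 ∣ #n.divisors) : ArithmeticFunction R) := by
  have hL := isMultiplicative_indicatorOf_squarefree.mul
    (isMultiplicative_powIndicator (R := R) 3)
  have hR := isMultiplicative_indicatorOf_not_dvd_card_divisors (R := R) Nat.prime_three
  refine (hL.eq_iff_eq_on_prime_powers _ _ hR).mpr fun p i hp => ?_
  cases i with
  | zero => rw [pow_zero, hL.map_one, hR.map_one]
  | succ k =>
    rw [indicatorOf_squarefree_mul_apply_prime_pow_succ _ hp,
      powIndicator_apply_prime_pow hp three_ne_zero, powIndicator_apply_prime_pow hp three_ne_zero,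
      indicatorOf_apply (pow_ne_zero _ hp.ne_zero), ← sigma_zero_apply,
      sigma_zero_apply_prime_pow hp]
    split_ifs <;> first | omega | simp

lemma indicatorOf_not_three_dvd_card_divisors_mul_powIndicator_two [CommSemiring R] :
    (indicatorOf (fun n => ¬ 3 ∣ #n.divisors) : ArithmeticFunction R) * powIndicator 2 =
      (ζ : ArithmeticFunction R) * powIndicator 3 := by
  rw [← indicatorOf_squarefree_mul_powIndicator_three, mul_right_comm,
    indicatorOf_squarefree_mul_powIndicator_two]

section coprime

variable {N : ℕ}

lemma indicatorOf_coprime_mul_apply [MulZeroOneClass R] (m n : ℕ) :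
    (indicatorOf (·.Coprime N) (m * n) : R) =
      indicatorOf (·.Coprime N) m * indicatorOf (·.Coprime N) n :=
  indicatorOf_mul_apply Nat.coprime_mul_iff_left

lemma indicatorOf_coprime_pow_apply [Zero R] [One R] {r : ℕ} (hr : r ≠ 0) (m : ℕ) :
    (indicatorOf (·.Coprime N) (m ^ r) : R) = indicatorOf (·.Coprime N) m := by
  rcases eq_or_ne m 0 with rfl | hm
  · simp [hr]
  · rw [indicatorOf_apply hm, indicatorOf_apply (pow_ne_zero r hm)]
    simp only [Nat.coprime_pow_left_iff (Nat.pos_of_ne_zero hr)]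
    congr

lemma LSeries_indicatorOf_coprime [NeZero N] (s : ℂ) :
    LSeries ↗(indicatorOf (·.Coprime N) : ArithmeticFunction ℂ) s =
      LSeries ↗(1 : DirichletCharacter ℂ N) s := by
  refine LSeries_congr (fun {n} hn => ?_) s
  rw [indicatorOf_apply hn]
  split_ifs with h
  · exact (MulChar.one_apply ((ZMod.isUnit_iff_coprime n N).mpr h)).symm
  · exact (MulChar.map_nonunit _ (mt (ZMod.isUnit_iff_coprime n N).mp h)).symm

end coprime

lemma LSeries_pmul_powIndicator {f : ArithmeticFunction ℂ} {r : ℕ} (hr : r ≠ 0)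
    (hf : ∀ m, f (m ^ r) = f m) (s : ℂ) :
    LSeries ↗(f.pmul (powIndicator r)) s = LSeries ↗f (r * s) := by
  have hsupp : Function.support (term ↗(f.pmul (powIndicator r)) s) ⊆ Set.range (· ^ r) := by
    intro n hn
    by_contra h
    refine hn ?_
    rw [term_def, pmul_apply, powIndicator,
      indicatorOf_apply_of_not (P := fun n => ∃ m, m ^ r = n) h, mul_zero, zero_div, ite_self]
  rw [LSeries, LSeries, ← (Nat.pow_left_injective hr).tsum_eq hsupp]
  refine tsum_congr fun m => ?_
  rcases eq_or_ne m 0 with rfl | hm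
  · simp [hr]
  · rw [term_of_ne_zero (pow_ne_zero r hm), term_of_ne_zero hm, pmul_apply, hf,
      powIndicator, indicatorOf_apply_of_prop (pow_ne_zero r hm) ⟨m, rfl⟩, mul_one,
      Nat.cast_pow, ← Complex.natCast_cpow_natCast_mul]

lemma LSeries_coprime_not_three_dvd_card_divisors_mul (N : ℕ) [NeZero N] {s : ℂ}
    (hs : 1 < s.re) :
    LSeries ↗(indicatorOf (fun n => n.Coprime N ∧ ¬ 3 ∣ #n.divisors) : ArithmeticFunction ℂ) s *
        LSeries ↗(1 : DirichletCharacter ℂ N) (2 * s) =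
      LSeries ↗(1 : DirichletCharacter ℂ N) s * LSeries ↗(1 : DirichletCharacter ℂ N) (3 * s) := by
  set c : ArithmeticFunction ℂ := indicatorOf (·.Coprime N)
  have key : c.pmul (indicatorOf fun n => ¬ 3 ∣ #n.divisors) * c.pmul (powIndicator 2) =
      c * c.pmul (powIndicator 3) := by
    rw [pmul_mul_pmul indicatorOf_coprime_mul_apply,
      indicatorOf_not_three_dvd_card_divisors_mul_powIndicator_two,
      ← pmul_mul_pmul indicatorOf_coprime_mul_apply, pmul_zeta]
  have summable (P : ℕ → Prop) : LSeriesSummable ↗(c.pmul (indicatorOf P)) s := by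
    rw [pmul_indicatorOf]
    exact LSeriesSummable_indicatorOf _ hs
  have hL := congrArg (LSeries ↗· s) key
  rw [LSeries_mul' (g := c.pmul (powIndicator 2)) (summable _) (summable _),
    LSeries_mul' (g := c.pmul (powIndicator 3)) (LSeriesSummable_indicatorOf _ hs) (summable _),
    LSeries_pmul_powIndicator two_ne_zero (indicatorOf_coprime_pow_apply two_ne_zero),
    LSeries_pmul_powIndicator three_ne_zero (indicatorOf_coprime_pow_apply three_ne_zero),
    pmul_indicatorOf] at hL
  simpa only [LSeries_indicatorOf_coprime, Nat.cast_ofNat] using hL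

end ArithmeticFunction

theorem dirichlet_series_tau_not_div_three (s : ℂ) (hs : 1 < s.re) :
    ∑' k : ℕ, (if 0 < k ∧ Nat.gcd k 3 = 1 ∧ ¬ (3 ∣ k.divisors.card)
        then (1 : ℂ) / (k : ℂ) ^ s else 0) =
      riemannZeta s * riemannZeta (3 * s) / riemannZeta (2 * s) *
        ((1 - (27 : ℂ) ^ (-s)) / (1 + (3 : ℂ) ^ (-s))) := by
  have hs2 : 1 < (2 * s).re := by
    simp only [Complex.mul_re, Complex.re_ofNat, Complex.im_ofNat, zero_mul, sub_zero]
    linarith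
  have hs3 : 1 < (3 * s).re := by
    simp only [Complex.mul_re, Complex.re_ofNat, Complex.im_ofNat, zero_mul, sub_zero]
    linarith
  have hL := LSeries_coprime_not_three_dvd_card_divisors_mul 3 hs
  have hne := DirichletCharacter.LSeries_ne_zero_of_one_lt_re (1 : DirichletCharacter ℂ 3) hs2
  simp only [DirichletCharacter.LSeries_one_eq_of_prime Nat.prime_three, hs, hs2, hs3,
    Nat.cast_ofNat] at hL hne
  set x := (3 : ℂ) ^ (-s)
  have hpow (n : ℕ) : (3 : ℂ) ^ (-(n * s)) = x ^ n := by rw [← mul_neg, Complex.cpow_nat_mul]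
  have h27 : (27 : ℂ) ^ (-s) = x ^ 3 := by
    rw [show (27 : ℂ) = ((3 : ℕ) : ℂ) ^ 3 by norm_num, ← Complex.natCast_cpow_natCast_mul, mul_neg]
    exact_mod_cast hpow 3
  rw [show (3 : ℂ) ^ (-(2 * s)) = x ^ 2 by exact_mod_cast hpow 2] at hL hne
  rw [show (3 : ℂ) ^ (-(3 * s)) = x ^ 3 by exact_mod_cast hpow 3] at hL
  have hx : (1 - x) * (1 + x) ≠ 0 := by
    rw [show (1 - x) * (1 + x) = 1 - x ^ 2 by ring]
    exact left_ne_zero_of_mul hne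
  rw [← LSeries_indicatorOf (fun k => k.Coprime 3 ∧ ¬ 3 ∣ #k.divisors), h27, div_mul_div_comm,
    eq_div_iff (mul_ne_zero (right_ne_zero_of_mul hne) (right_ne_zero_of_mul hx))]
  refine mul_left_cancel₀ (left_ne_zero_of_mul hx) ?_
  linear_combination hL
end

section
/- Let χ₃ be the nontrivial Dirichlet character modulo 3 (so χ₃(n) = 1 if n ≡ 1 (mod 3), χ₃(n) = −1 if n ≡ 2 (mod 3), and χ₃(n) = 0 if 3 | n), and for a positive integer k let W(k) be the number of primes p dividing k whose exact exponent in k is congruent to 1 modulo 3. Then for every complex number s with Re(s) > 1, the Dirichlet series ∑ χ₃(k)·(−1)^{W(k)}/kˢ, taken over positive integers k with τ(k) not divisible by 3, equals L(3s, χ₃)/L(s, χ₃). -/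
/-- `W k` is the number of primes `p` dividing `k` whose exact exponent in `k`
is congruent to `1` modulo `3`. -/
def W (k : ℕ) : ℕ :=
  (k.primeFactors.filter (fun p => k.factorization p % 3 = 1)).card

open LSeries Complex ArithmeticFunction Finset DirichletCharacter
open scoped Classical

private lemma W_one : W 1 = 0 := by simp [W]

private lemma W_prime_pow {p : ℕ} (hp : p.Prime) {j : ℕ} (hj : j ≠ 0) :
    W (p ^ j) = if j % 3 = 1 then 1 else 0 := by
  rw [W, Nat.primeFactors_prime_pow hj hp, hp.factorization_pow]
  rw [Finset.filter_singleton]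
  simp only [Finsupp.single_eq_same]
  split <;> simp

private lemma W_mul {m n : ℕ} (hm : m ≠ 0) (hn : n ≠ 0) (h : Nat.Coprime m n) :
    W (m * n) = W m + W n := by
  have hd : Disjoint m.primeFactors n.primeFactors := h.disjoint_primeFactors
  have key : ∀ {a b : ℕ}, a ≠ 0 → b ≠ 0 → Disjoint a.primeFactors b.primeFactors →
      (a.primeFactors.filter fun p => (a * b).factorization p % 3 = 1)
        = a.primeFactors.filter fun p => a.factorization p % 3 = 1 := by
    intro a b ha hb hdis
    apply Finset.filter_congr
    intro p hp
    have h0 : b.factorization p = 0 := by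
      have hpb : p ∉ b.primeFactors := Finset.disjoint_left.mp hdis hp
      rwa [← Nat.support_factorization, Finsupp.notMem_support_iff] at hpb
    rw [Nat.factorization_mul ha hb]
    simp [h0]
  rw [W, W, W, Nat.primeFactors_mul hm hn, Finset.filter_union,
    Finset.card_union_of_disjoint (Finset.disjoint_filter_filter hd),
    key hm hn hd]
  congr 1
  rw [mul_comm m n]
  exact congrArg Finset.card (key hn hm hd.symm)

private def c3 (j : ℕ) : ℂ := if j % 3 = 0 then 1 else if j % 3 = 1 then -1 else 0

private lemma sum_c3 (i : ℕ) :
    ∑ j ∈ Finset.range (i + 1), c3 j = if i % 3 = 0 then 1 else 0 := by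
  induction i with
  | zero => simp [c3]
  | succ n ih =>
    rw [Finset.sum_range_succ, ih]
    have h : n % 3 = 0 ∨ n % 3 = 1 ∨ n % 3 = 2 := by omega
    rcases h with h | h | h
    · have h1 : (n + 1) % 3 = 1 := by omega
      simp [c3, h, h1]
    · have h1 : (n + 1) % 3 = 2 := by omega
      simp [c3, h, h1]
    · have h1 : (n + 1) % 3 = 0 := by omega
      simp [c3, h, h1]

noncomputable section

private def Xf (χ : DirichletCharacter ℂ 3) : ℕ → ℂ := fun n => χ (n : ZMod 3)

private def bf (χ : DirichletCharacter ℂ 3) : ℕ → ℂ :=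
  fun k => if ¬ 3 ∣ k.divisors.card then Xf χ k * (-1) ^ W k else 0

private def ff (χ : DirichletCharacter ℂ 3) : ℕ → ℂ :=
  fun n => if ∃ m : ℕ, m ^ 3 = n then Xf χ n else 0

variable (χ : DirichletCharacter ℂ 3)

private lemma Xf_one : Xf χ 1 = 1 := by simp [Xf]

private lemma Xf_mul (m n : ℕ) : Xf χ (m * n) = Xf χ m * Xf χ n := by
  simp [Xf, Nat.cast_mul, map_mul]

private lemma Xf_pow (p j : ℕ) : Xf χ (p ^ j) = Xf χ p ^ j := by
  simp [Xf, Nat.cast_pow, map_pow]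

private lemma toA_apply (g : ℕ → ℂ) {n : ℕ} (hn : n ≠ 0) :
    toArithmeticFunction g n = g n := by
  simp [toArithmeticFunction, hn]

private lemma bf_one : bf χ 1 = 1 := by
  simp [bf, Nat.divisors_one, W_one, Xf_one]

private lemma ff_one : ff χ 1 = 1 := by
  have h1 : ∃ m : ℕ, m ^ 3 = 1 := ⟨1, one_pow 3⟩
  simp [ff, h1, Xf_one]

private lemma bf_prime_pow {p : ℕ} (hp : p.Prime) (j : ℕ) :
    bf χ (p ^ j) = c3 j * Xf χ p ^ j := by
  rcases Nat.eq_zero_or_pos j with rfl | hj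
  · simp [bf_one, c3]
  have hj0 : j ≠ 0 := hj.ne'
  have hcard : (p ^ j).divisors.card = j + 1 := by
    rw [Nat.divisors_prime_pow hp, Finset.card_map, Finset.card_range]
  have hW := W_prime_pow hp hj0
  have h : j % 3 = 0 ∨ j % 3 = 1 ∨ j % 3 = 2 := by omega
  rcases h with h | h | h
  · have hdvd : ¬ 3 ∣ j + 1 := by omega
    simp only [bf, hcard, hW, Xf_pow, c3, h, if_pos hdvd]
    norm_num
  · have hdvd : ¬ 3 ∣ j + 1 := by omega
    simp only [bf, hcard, hW, Xf_pow, c3, h, if_pos hdvd]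
    norm_num
  · have hdvd : 3 ∣ j + 1 := by omega
    simp only [bf, hcard, c3, h]
    rw [if_neg (not_not_intro hdvd)]
    norm_num

private lemma cube_pp {p : ℕ} (hp : p.Prime) (i : ℕ) :
    (∃ m : ℕ, m ^ 3 = p ^ i) ↔ 3 ∣ i := by
  constructor
  · rintro ⟨m, hm⟩
    have := congrArg (fun k => k.factorization p) hm
    simp only [Nat.factorization_pow, hp.factorization_pow, Finsupp.smul_apply,
      Finsupp.single_eq_same, smul_eq_mul] at this
    exact ⟨m.factorization p, this.symm⟩
  · rintro ⟨t, rfl⟩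
    exact ⟨p ^ t, by ring⟩

private lemma hBmult : (toArithmeticFunction (bf χ)).IsMultiplicative := by
  refine ⟨by rw [toA_apply _ one_ne_zero, bf_one], fun {m n} hmn => ?_⟩
  rcases eq_or_ne m 0 with rfl | hm
  · obtain rfl : n = 1 := by simpa using hmn
    simp [toA_apply _ one_ne_zero, bf_one]
  rcases eq_or_ne n 0 with rfl | hn
  · obtain rfl : m = 1 := by simpa using hmn
    simp [toA_apply _ one_ne_zero, bf_one]
  rw [toA_apply _ (mul_ne_zero hm hn), toA_apply _ hm, toA_apply _ hn]
  have hτ : (m * n).divisors.card = m.divisors.card * n.divisors.card :=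
    hmn.card_divisors_mul
  by_cases h3m : 3 ∣ m.divisors.card
  · have h3 : 3 ∣ (m * n).divisors.card := hτ ▸ h3m.mul_right _
    simp [bf, h3, h3m]
  by_cases h3n : 3 ∣ n.divisors.card
  · have h3 : 3 ∣ (m * n).divisors.card := hτ ▸ h3n.mul_left _
    simp [bf, h3, h3n]
  have h3mn : ¬ 3 ∣ (m * n).divisors.card := by
    rw [hτ]
    intro hdvd
    rcases (Nat.Prime.dvd_mul (by norm_num)).mp hdvd with h | h
    exacts [h3m h, h3n h]
  simp only [bf, h3m, h3n, h3mn, not_false_eq_true, if_true]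
  rw [W_mul hm hn hmn, Xf_mul, pow_add]
  ring

private lemma hXmult : (toArithmeticFunction (Xf χ)).IsMultiplicative := by
  refine ⟨by rw [toA_apply _ one_ne_zero, Xf_one], fun {m n} hmn => ?_⟩
  rcases eq_or_ne m 0 with rfl | hm
  · obtain rfl : n = 1 := by simpa using hmn
    simp [toA_apply _ one_ne_zero, Xf_one]
  rcases eq_or_ne n 0 with rfl | hn
  · obtain rfl : m = 1 := by simpa using hmn
    simp [toA_apply _ one_ne_zero, Xf_one]
  rw [toA_apply _ (mul_ne_zero hm hn), toA_apply _ hm, toA_apply _ hn, Xf_mul]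

private lemma hFmult : (toArithmeticFunction (ff χ)).IsMultiplicative := by
  refine ⟨by rw [toA_apply _ one_ne_zero, ff_one], fun {m n} hmn => ?_⟩
  rcases eq_or_ne m 0 with rfl | hm
  · obtain rfl : n = 1 := by simpa using hmn
    simp [toA_apply _ one_ne_zero, ff_one]
  rcases eq_or_ne n 0 with rfl | hn
  · obtain rfl : m = 1 := by simpa using hmn
    simp [toA_apply _ one_ne_zero, ff_one]
  rw [toA_apply _ (mul_ne_zero hm hn), toA_apply _ hm, toA_apply _ hn]
  by_cases hcube : ∃ c : ℕ, c ^ 3 = m * n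
  · obtain ⟨c, hc⟩ := hcube
    have hdm : ∃ d : ℕ, d ^ 3 = m := by
      obtain ⟨d, hd⟩ := exists_eq_pow_of_mul_eq_pow
        (isUnit_of_dvd_one ((Nat.coprime_iff_gcd_eq_one.mp hmn) ▸ dvd_refl _)) hc.symm
      exact ⟨d, hd.symm⟩
    have hdn : ∃ d : ℕ, d ^ 3 = n := by
      obtain ⟨d, hd⟩ := exists_eq_pow_of_mul_eq_pow
        (isUnit_of_dvd_one ((Nat.coprime_iff_gcd_eq_one.mp hmn.symm) ▸ dvd_refl _))
        ((mul_comm m n ▸ hc).symm)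
      exact ⟨d, hd.symm⟩
    have hmn3 : ∃ m1 : ℕ, m1 ^ 3 = m * n := ⟨c, hc⟩
    simp only [ff, if_pos hmn3, if_pos hdm, if_pos hdn, Xf_mul]
  · have hnot : ¬ ((∃ d : ℕ, d ^ 3 = m) ∧ (∃ e : ℕ, e ^ 3 = n)) := by
      rintro ⟨⟨d, rfl⟩, ⟨e, rfl⟩⟩
      exact hcube ⟨d * e, by ring⟩
    simp only [ff, if_neg hcube]
    rcases not_and_or.mp hnot with h | h
    · rw [if_neg h]; ring
    · rw [if_neg h]; ring

private lemma conv_eq :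
    toArithmeticFunction (bf χ) * toArithmeticFunction (Xf χ)
      = toArithmeticFunction (ff χ) := by
  rw [ArithmeticFunction.IsMultiplicative.eq_iff_eq_on_prime_powers _ ((hBmult χ).mul (hXmult χ)) _ (hFmult χ)]
  intro p i hp
  have hp0 : p ≠ 0 := hp.pos.ne'
  have hppow : ∀ j : ℕ, p ^ j ≠ 0 := fun j => pow_ne_zero j hp0
  rw [ArithmeticFunction.mul_apply,
    Nat.sum_divisorsAntidiagonal
      (fun a b => toArithmeticFunction (bf χ) a * toArithmeticFunction (Xf χ) b),
    Nat.sum_divisors_prime_pow hp]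
  have hterm : ∀ x ∈ Finset.range (i + 1),
      toArithmeticFunction (bf χ) (p ^ x) * toArithmeticFunction (Xf χ) (p ^ i / p ^ x)
        = c3 x * Xf χ p ^ i := by
    intro x hx
    have hxi : x ≤ i := Nat.lt_succ_iff.mp (Finset.mem_range.mp hx)
    rw [Nat.pow_div hxi hp.pos, toA_apply _ (hppow x), toA_apply _ (hppow (i - x)),
      bf_prime_pow χ hp, Xf_pow, mul_assoc, ← pow_add]
    congr 2
    omega
  rw [Finset.sum_congr rfl hterm, ← Finset.sum_mul, sum_c3,
    toA_apply _ (hppow i)]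
  simp only [ff, Xf_pow]
  by_cases h3 : 3 ∣ i
  · rw [if_pos ((cube_pp hp i).mpr h3), if_pos (by omega : i % 3 = 0), one_mul]
  · rw [if_neg (fun hc => h3 ((cube_pp hp i).mp hc)),
      if_neg (by omega : ¬ i % 3 = 0), zero_mul]

end

theorem dirichlet_series_chi3_W (χ : DirichletCharacter ℂ 3)
    (hχ : ∀ n : ℕ, χ (n : ZMod 3) =
      if n % 3 = 1 then 1 else if n % 3 = 2 then -1 else 0)
    (s : ℂ) (hs : 1 < s.re) :
    ∑' k : ℕ, (if 0 < k ∧ ¬ (3 ∣ k.divisors.card)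
        then χ (k : ZMod 3) * (-1) ^ (W k) / (k : ℂ) ^ s else 0) =
      DirichletCharacter.LFunction χ (3 * s) / DirichletCharacter.LFunction χ s := by
  classical
  have h3s : 1 < (3 * s).re := by
    have h : (3 * s).re = 3 * s.re := by simp [Complex.mul_re]
    rw [h]; linarith
  have hXabs : ∀ n : ℕ, ‖Xf χ n‖ ≤ 1 := by
    intro n
    rw [show Xf χ n = χ (n : ZMod 3) from rfl, hχ n]
    split_ifs <;> simp
  have hbabs : ∀ n : ℕ, ‖bf χ n‖ ≤ 1 := by
    intro n
    by_cases h : ¬ 3 ∣ n.divisors.card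
    · rw [show bf χ n = Xf χ n * (-1) ^ W n from if_pos h, norm_mul, norm_pow]
      simp only [norm_neg, norm_one, one_pow, mul_one]
      exact hXabs n
    · rw [show bf χ n = 0 from if_neg h]; simp
  have hb_s : LSeriesSummable (bf χ) s :=
    LSeriesSummable_of_bounded_of_one_lt_re (fun n _ => hbabs n) hs
  have hX_s : LSeriesSummable (Xf χ) s :=
    LSeriesSummable_of_bounded_of_one_lt_re (fun n _ => hXabs n) hs
  have hconv : LSeries (bf χ) s * LSeries (Xf χ) s = LSeries (ff χ) s := by
    rw [← LSeries_convolution' hb_s hX_s]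
    refine LSeries_congr (s := s) fun {n} hn => ?_
    have h1 : LSeries.convolution (bf χ) (Xf χ) n
        = (toArithmeticFunction (bf χ) * toArithmeticFunction (Xf χ)) n := rfl
    rw [h1, conv_eq χ, toA_apply _ hn]
  have hXcube : ∀ m : ℕ, Xf χ m ^ 3 = Xf χ m := by
    intro m
    have h : Xf χ m = if m % 3 = 1 then 1 else if m % 3 = 2 then -1 else 0 := hχ m
    split_ifs at h <;> rw [h] <;> norm_num
  have hfL : LSeries (ff χ) s = DirichletCharacter.LFunction χ (3 * s) := by
    rw [DirichletCharacter.LFunction_eq_LSeries χ h3s]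
    have hinj : Function.Injective (fun m : ℕ => m ^ 3) :=
      Nat.pow_left_injective (by norm_num)
    have hsupp : Function.support (term (ff χ) s) ⊆ Set.range (fun m : ℕ => m ^ 3) := by
      intro n hn
      rcases eq_or_ne n 0 with rfl | hn0
      · exact ⟨0, by norm_num⟩
      by_cases he : ∃ m : ℕ, m ^ 3 = n
      · obtain ⟨m, hm⟩ := he
        exact ⟨m, hm⟩
      · exfalso
        apply hn
        rw [term_of_ne_zero hn0, show ff χ n = 0 from if_neg he, zero_div]
    rw [LSeries, LSeries, ← Function.Injective.tsum_eq hinj hsupp]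
    apply tsum_congr
    intro m
    rcases eq_or_ne m 0 with rfl | hm
    · norm_num
    have hm3 : m ^ 3 ≠ 0 := pow_ne_zero _ hm
    rw [term_of_ne_zero hm3, term_of_ne_zero hm]
    have hff : ff χ (m ^ 3) = χ (m : ZMod 3) := by
      rw [show ff χ (m ^ 3) = Xf χ (m ^ 3) from if_pos ⟨m, rfl⟩, Xf_pow, hXcube]
      rfl
    have hden : ((m ^ 3 : ℕ) : ℂ) ^ s = (m : ℂ) ^ (3 * s) := by
      push_cast
      rw [← Complex.natCast_cpow_natCast_mul m 3 s]
      norm_num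
    rw [hff, hden]
  have hXL : LSeries (Xf χ) s = DirichletCharacter.LFunction χ s :=
    (DirichletCharacter.LFunction_eq_LSeries χ hs).symm
  have hL0 : DirichletCharacter.LFunction χ s ≠ 0 := by
    refine DirichletCharacter.LFunction_ne_zero_of_one_le_re χ (Or.inr ?_) hs.le
    rintro rfl
    simp at hs
  have hLHS : (∑' k : ℕ, (if 0 < k ∧ ¬ (3 ∣ k.divisors.card)
        then χ (k : ZMod 3) * (-1) ^ (W k) / (k : ℂ) ^ s else 0))
      = LSeries (bf χ) s := by
    rw [LSeries]
    apply tsum_congr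
    intro k
    rcases eq_or_ne k 0 with rfl | hk
    · simp [LSeries.term_zero]
    rw [term_of_ne_zero hk]
    have hk0 : 0 < k := Nat.pos_of_ne_zero hk
    by_cases h : 3 ∣ k.divisors.card
    · rw [if_neg (by tauto), show bf χ k = 0 from if_neg (by tauto), zero_div]
    · rw [if_pos ⟨hk0, h⟩, show bf χ k = Xf χ k * (-1) ^ W k from if_pos h]
      rfl
  rw [hLHS, eq_div_iff hL0, ← hXL, hconv, hfL]
end
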